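/- arXiv:2004.00453 — 2 statements merged into one kernel-verified Lean document; each statement's English description precedes it below -/
import Mathlib

section
/- Let T = [[1, 0], [0, 0]] and S = [[0, 1], [0, −1]] in M₂(ℂ). Then T ⊥_{ωB} S but S is not ⊥_{ωB} T; in particular ω(S + T) = √5/2 < (1+√2)/2 = ω(S). Hence numerical radius Birkhoff orthogonality is not symmetric. -/
open Filter Topology

/-- Numerical radius of a 2×2 complex matrix (w.r.t. the standard inner product). -/
noncomputable def numRad2 (A : Matrix (Fin 2) (Fin 2) ℂ) : ℝ :=
  sSup {r : ℝ | ∃ x : EuclideanSpace ℂ (Fin 2), ‖x‖ = 1 ∧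
    r = ‖(inner ℂ x ((WithLp.equiv 2 (Fin 2 → ℂ)).symm (A.mulVec x)) : ℂ)‖}

/-- Numerical radius Birkhoff orthogonality for 2×2 matrices. -/
def wBOrth2 (A B : Matrix (Fin 2) (Fin 2) ℂ) : Prop :=
  ∀ lam : ℂ, numRad2 A ≤ numRad2 (A + lam • B)

/-!
The numerical radius is read off the quadratic form `⟨x, A x⟩` in coordinates. For `S` and
`S + T` an elementary real inequality in `|x₀|, |x₁|` bounds it from above, and the bound is
attained at a real eigenvector of the Hermitian part of the matrix, giving
`ω(S) = (1 + √2)/2` and `ω(S + T) = √5/2`. So `λ = 1` witnesses `¬ S ⊥ T`. Conversely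
`ω(T) = 1`, and every `T + λS` keeps the diagonal entry `1`, which is a value
`⟨e₀, (T + λS) e₀⟩` of the form; hence `ω(T + λS) ≥ 1 = ω(T)`.
-/

open ComplexConjugate Matrix

section

variable (A : Matrix (Fin 2) (Fin 2) ℂ)

theorem norm_inner_le_numRad2_mul_sq (x : EuclideanSpace ℂ (Fin 2)) :
    ‖(inner ℂ x (WithLp.toLp 2 (A *ᵥ x)) : ℂ)‖ ≤ numRad2 A * ‖x‖ ^ 2 := by
  have hbdd : BddAbove {r : ℝ | ∃ x : EuclideanSpace ℂ (Fin 2), ‖x‖ = 1 ∧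
      r = ‖(inner ℂ x (WithLp.toLp 2 (A *ᵥ x)) : ℂ)‖} := by
    refine ⟨‖toEuclideanCLM (𝕜 := ℂ) A‖, ?_⟩
    rintro _ ⟨x, hx, rfl⟩
    calc _ ≤ ‖x‖ * ‖toEuclideanCLM (𝕜 := ℂ) A x‖ := norm_inner_le_norm _ _
      _ ≤ ‖x‖ * (‖toEuclideanCLM (𝕜 := ℂ) A‖ * ‖x‖) := by
          gcongr; exact ContinuousLinearMap.le_opNorm _ _
      _ = _ := by simp [hx]
  rcases eq_or_ne x 0 with rfl | hx
  · simp
  have hx' : ‖x‖ ≠ 0 := norm_ne_zero_iff.mpr hx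
  set c : ℂ := ((‖x‖⁻¹ : ℝ) : ℂ)
  have hc : ‖c‖ = ‖x‖⁻¹ := by simp [c]
  have hunit := le_csSup hbdd ⟨c • x, by rw [norm_smul, hc, inv_mul_cancel₀ hx'], rfl⟩
  have hscale : ‖(inner ℂ (c • x) (WithLp.toLp 2 (A *ᵥ (c • x))) : ℂ)‖
      = ‖(inner ℂ x (WithLp.toLp 2 (A *ᵥ x)) : ℂ)‖ / ‖x‖ ^ 2 := by
    rw [mulVec_smul, WithLp.toLp_smul, inner_smul_left, inner_smul_right,
      norm_mul, norm_mul, RCLike.norm_conj, hc]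
    field_simp
  rwa [WithLp.ofLp_smul, hscale, div_le_iff₀ (by positivity)] at hunit

theorem numRad2_le {c : ℝ} (hc : ∀ x : EuclideanSpace ℂ (Fin 2),
    ‖(inner ℂ x (WithLp.toLp 2 (A *ᵥ x)) : ℂ)‖ ≤ c * ‖x‖ ^ 2) : numRad2 A ≤ c := by
  refine csSup_le ⟨_, EuclideanSpace.single 0 1, by simp, rfl⟩ ?_
  rintro _ ⟨x, hx, rfl⟩
  simpa [hx] using hc x

theorem norm_apply_self_le_numRad2 (i : Fin 2) : ‖A i i‖ ≤ numRad2 A := by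
  simpa [EuclideanSpace.inner_eq_star_dotProduct] using
    norm_inner_le_numRad2_mul_sq A (EuclideanSpace.single i 1)

end

theorem inner_mulVec_fin_two (a b c d : ℂ) (x : EuclideanSpace ℂ (Fin 2)) :
    (inner ℂ x (WithLp.toLp 2 (!![a, b; c, d] *ᵥ x)) : ℂ) =
      conj (x 0) * (a * x 0 + b * x 1) + conj (x 1) * (c * x 0 + d * x 1) := by
  simp [EuclideanSpace.inner_eq_star_dotProduct, dotProduct, Fin.sum_univ_two, mul_comm]

theorem norm_sq_eq_fin_two (x : EuclideanSpace ℂ (Fin 2)) : ‖x‖ ^ 2 = ‖x 0‖ ^ 2 + ‖x 1‖ ^ 2 := by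
  simp [EuclideanSpace.norm_sq_eq, Fin.sum_univ_two]

theorem le_numRad2_of_real {a b c d k : ℝ} (r : ℝ)
    (h : k * (1 + r ^ 2) ≤ |a + (b + c) * r + d * r ^ 2|) :
    k ≤ numRad2 !![(a : ℂ), b; c, d] := by
  have hx := norm_inner_le_numRad2_mul_sq !![(a : ℂ), b; c, d] !₂[1, (r : ℂ)]
  have hinner : (inner ℂ !₂[1, (r : ℂ)] (WithLp.toLp 2 (!![(a : ℂ), b; c, d] *ᵥ !₂[1, (r : ℂ)])) : ℂ)
      = ((a + (b + c) * r + d * r ^ 2 : ℝ) : ℂ) := by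
    rw [inner_mulVec_fin_two]
    simp only [cons_val_zero, cons_val_one, cons_val_fin_one, map_one, Complex.conj_ofReal]
    push_cast
    ring
  rw [hinner, Complex.norm_real, Real.norm_eq_abs, norm_sq_eq_fin_two] at hx
  simp only [cons_val_zero, cons_val_one, cons_val_fin_one, norm_one, one_pow, Complex.norm_real,
    Real.norm_eq_abs, sq_abs] at hx
  exact le_of_mul_le_mul_right (h.trans hx) (by positivity)

theorem mul_add_sq_le (p q : ℝ) :
    p * q + q ^ 2 ≤ (1 + √2) / 2 * (p ^ 2 + q ^ 2) := by
  have h2 : √2 ^ 2 = 2 := Real.sq_sqrt (by norm_num)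
  have hsq : (1 + √2) / 2 * (p ^ 2 + q ^ 2) - (p * q + q ^ 2)
      = (1 + √2) / 2 * (p - (√2 - 1) * q) ^ 2 := by
    linear_combination (2 * p * q - (√2 - 1) * q ^ 2) / 2 * h2
  have := mul_nonneg (by positivity : (0 : ℝ) ≤ (1 + √2) / 2) (sq_nonneg (p - (√2 - 1) * q))
  linarith

theorem abs_sq_sub_sq_add_mul_le (p q : ℝ) :
    |p ^ 2 - q ^ 2| + p * q ≤ √5 / 2 * (p ^ 2 + q ^ 2) := by
  have h5 : (√5 / 2 * (p ^ 2 + q ^ 2)) ^ 2 = 5 / 4 * (p ^ 2 + q ^ 2) ^ 2 := by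
    rw [mul_pow, div_pow, Real.sq_sqrt (by norm_num)]; ring
  have hd : |p ^ 2 - q ^ 2| ^ 2 = (p ^ 2 - q ^ 2) ^ 2 := sq_abs _
  refine abs_le_of_sq_le_sq' ?_ (by positivity) |>.2
  -- Cauchy–Schwarz: `(d + pq)² ≤ (1 + 1/4) (d² + 4p²q²)`, and `d² + 4p²q² = (p² + q²)²`.
  nlinarith [sq_nonneg (|p ^ 2 - q ^ 2| - 4 * p * q)]

theorem numRad2_S : numRad2 !![0, 1; 0, -1] = (1 + √2) / 2 := by
  refine le_antisymm (numRad2_le _ fun x => ?_) ?_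
  · rw [inner_mulVec_fin_two, norm_sq_eq_fin_two]
    calc _ = ‖conj (x 0) * x 1 - conj (x 1) * x 1‖ := by simp [sub_eq_add_neg]
      _ ≤ ‖x 0‖ * ‖x 1‖ + ‖x 1‖ ^ 2 := by
          refine (norm_sub_le _ _).trans_eq ?_
          simp [sq]
      _ ≤ _ := mul_add_sq_le _ _
  · -- `(1, -(1 + √2))` is an eigenvector of the Hermitian part of `S`.
    have hs : √2 ^ 2 = 2 := Real.sq_sqrt (by norm_num)
    have hval : 0 + (1 + 0) * -(1 + √2) + -1 * (-(1 + √2)) ^ 2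
        = -((1 + √2) / 2 * (1 + (-(1 + √2)) ^ 2)) := by
      linear_combination (1 + √2) / 2 * hs
    simpa using le_numRad2_of_real (a := 0) (b := 1) (c := 0) (d := -1) (-(1 + √2))
      (by rw [hval, abs_neg, abs_of_nonneg (by positivity)])

theorem numRad2_S_add_T : numRad2 (!![0, 1; 0, -1] + !![1, 0; 0, 0]) = √5 / 2 := by
  rw [show (!![0, 1; 0, -1] + !![1, 0; 0, 0] : Matrix (Fin 2) (Fin 2) ℂ) = !![1, 1; 0, -1] by simp]
  refine le_antisymm (numRad2_le _ fun x => ?_) ?_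
  · rw [inner_mulVec_fin_two, norm_sq_eq_fin_two]
    calc _ = ‖((‖x 0‖ ^ 2 - ‖x 1‖ ^ 2 : ℝ) : ℂ) + conj (x 0) * x 1‖ := by
          congr 1
          push_cast
          linear_combination Complex.conj_mul' (x 0) - Complex.conj_mul' (x 1)
      _ ≤ |‖x 0‖ ^ 2 - ‖x 1‖ ^ 2| + ‖x 0‖ * ‖x 1‖ := by
          refine (norm_add_le _ _).trans_eq ?_
          rw [norm_mul, RCLike.norm_conj, Complex.norm_real, Real.norm_eq_abs]
      _ ≤ _ := abs_sq_sub_sq_add_mul_le _ _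
  · -- `(1, √5 - 2)` is an eigenvector of the Hermitian part of `S + T`.
    have hs : √5 ^ 2 = 5 := Real.sq_sqrt (by norm_num)
    have hval : 1 + (1 + 0) * (√5 - 2) + -1 * (√5 - 2) ^ 2 = √5 / 2 * (1 + (√5 - 2) ^ 2) := by
      linear_combination (1 - √5 / 2) * hs
    simpa using le_numRad2_of_real (a := 1) (b := 1) (c := 0) (d := -1) (√5 - 2)
      (by rw [hval, abs_of_nonneg (by positivity)])

theorem numRad2_T : numRad2 !![1, 0; 0, 0] = 1 := by
  refine le_antisymm (numRad2_le _ fun x => ?_) ?_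
  · rw [inner_mulVec_fin_two, norm_sq_eq_fin_two]
    simp [Complex.conj_mul']
  · simpa using norm_apply_self_le_numRad2 !![1, 0; 0, 0] 0

theorem stmt_7 :
    let T : Matrix (Fin 2) (Fin 2) ℂ := !![1, 0; 0, 0]
    let S : Matrix (Fin 2) (Fin 2) ℂ := !![0, 1; 0, -1]
    wBOrth2 T S ∧ ¬ wBOrth2 S T ∧
      numRad2 (S + T) = Real.sqrt 5 / 2 ∧ numRad2 S = (1 + Real.sqrt 2) / 2 ∧
      numRad2 (S + T) < numRad2 S := by
  intro T S
  have hlt : √5 / 2 < (1 + √2) / 2 := by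
    have h2 : 1 < √2 := Real.lt_sqrt zero_le_one |>.2 (by norm_num)
    have h5 : √5 < 1 + √2 :=
      (Real.sqrt_lt' (by positivity)).2 (by nlinarith [Real.sq_sqrt (zero_le_two (α := ℝ))])
    linarith
  refine ⟨fun lam => ?_, fun h => ?_, numRad2_S_add_T, numRad2_S, ?_⟩
  · rw [numRad2_T]
    simpa [T, S] using norm_apply_self_le_numRad2 (T + lam • S) 0
  · have h1 := h 1
    rw [one_smul, numRad2_S_add_T, numRad2_S] at h1
    exact h1.not_gt hlt
  · rwa [numRad2_S_add_T, numRad2_S]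
end

section
/- Suppose T ⊥_{ωB} S and for each sequence {xₙ} of unit vectors with limₙ |⟨Txₙ, xₙ⟩| = ω(T) there exists a sequence {yₙ} of unit vectors with limₙ |⟨Syₙ, yₙ⟩| = ω(S) and limₙ |⟨xₙ, yₙ⟩| = 1. Then S ⊥_{ωB} T. -/
/-!
Fix `λ`. Testing `T ⊥_ωB S` against the perturbations `ε λ̄ S`, `ε → 0`, gives unit vectors `xₙ`
with `|⟨T xₙ, xₙ⟩| → ω(T)` along which the first variation `re (λ ⟨T xₙ, xₙ⟩ conj ⟨S xₙ, xₙ⟩)` is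
`≥ -O(εₙ)`. The hypothesis supplies unit vectors `yₙ` with `|⟨S yₙ, yₙ⟩| → ω(S)` and
`|⟨xₙ, yₙ⟩| → 1`; nearly parallel unit vectors have asymptotically equal quadratic forms, so the
first variation along `yₙ` is asymptotically nonnegative too. Then
`ω(S + λT)² ≥ |⟨S yₙ, yₙ⟩ + λ ⟨T yₙ, yₙ⟩|² ≥ |⟨S yₙ, yₙ⟩|² + 2 re (λ ⟨T yₙ, yₙ⟩ conj ⟨S yₙ, yₙ⟩)`,
and the right-hand side has limit inferior at least `ω(S)²`.
-/

open Filter Topology ComplexOrder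

variable {H : Type*} [NormedAddCommGroup H] [InnerProductSpace ℂ H] [CompleteSpace H]

/-- The numerical radius of a bounded operator `T`:
`ω(T) = sup {|⟨Tx, x⟩| : ‖x‖ = 1}`. -/
noncomputable def numRad (T : H →L[ℂ] H) : ℝ :=
  sSup {r : ℝ | ∃ x : H, ‖x‖ = 1 ∧ r = ‖(inner ℂ x (T x) : ℂ)‖}

/-- Numerical radius Birkhoff orthogonality: `ω(T + λS) ≥ ω(T)` for all `λ ∈ ℂ`. -/
def wBOrth (T S : H →L[ℂ] H) : Prop :=
  ∀ lam : ℂ, numRad T ≤ numRad (T + lam • S)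

open scoped InnerProductSpace ComplexConjugate

namespace Complex

theorem sq_norm_add (z w : ℂ) : ‖z + w‖ ^ 2 = ‖z‖ ^ 2 + 2 * (z * conj w).re + ‖w‖ ^ 2 := by
  simp only [Complex.sq_norm, Complex.normSq_add]
  ring

theorem sq_norm_add_re_mul_conj_le (z w : ℂ) : ‖z‖ ^ 2 + 2 * (w * conj z).re ≤ ‖z + w‖ ^ 2 := by
  rw [add_comm z, sq_norm_add]
  nlinarith [sq_nonneg ‖w‖]

/-- The slack `ε ^ 2` in `hab` is what survives the division by `ε`. -/
theorem neg_mul_le_re_mul_conj_of_lt_norm_add {a b : ℂ} {ε R B : ℝ} (hε : 0 < ε) (ha : ‖a‖ ≤ R)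
    (hb : ‖b‖ ≤ B) (hab : R - ε ^ 2 < ‖a + ε * b‖) : -ε * (R + B ^ 2 / 2) ≤ (a * conj b).re := by
  have hexp : ‖a + ε * b‖ ^ 2 = ‖a‖ ^ 2 + 2 * ε * (a * conj b).re + ε ^ 2 * ‖b‖ ^ 2 := by
    rw [sq_norm_add, map_mul, conj_ofReal, norm_mul, norm_real, Real.norm_of_nonneg hε.le,
      mul_left_comm, re_ofReal_mul]
    ring
  have hR : 0 ≤ R := (norm_nonneg a).trans ha
  have hlower : R ^ 2 - 2 * ε ^ 2 * R ≤ ‖a + ε * b‖ ^ 2 := by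
    rcases le_or_gt (R - ε ^ 2) 0 with hneg | hpos
    · nlinarith [sq_nonneg ‖a + ε * b‖]
    · nlinarith
  have hscaled : ε * (-ε * (R + B ^ 2 / 2)) ≤ ε * (a * conj b).re := by
    nlinarith [pow_le_pow_left₀ (norm_nonneg a) ha 2, pow_le_pow_left₀ (norm_nonneg b) hb 2]
  exact le_of_mul_le_mul_left hscaled hε

end Complex

section InnerProduct

variable {𝕜 E : Type*} [RCLike 𝕜] [NormedAddCommGroup E] [InnerProductSpace 𝕜 E]

theorem norm_inner_apply_self_le (A : E →L[𝕜] E) {x : E} (hx : ‖x‖ = 1) :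
    ‖⟪x, A x⟫_𝕜‖ ≤ ‖A‖ := by
  simpa [hx] using (norm_inner_le_norm x (A x)).trans
    (mul_le_mul_of_nonneg_left (A.le_opNorm x) (norm_nonneg x))

theorem norm_inner_apply_self_sub_le (A : E →L[𝕜] E) (x y : E) :
    ‖⟪x, A x⟫_𝕜 - ⟪y, A y⟫_𝕜‖ ≤ ‖A‖ * (‖x‖ + ‖y‖) * ‖x - y‖ := by
  have hsplit : ⟪x, A x⟫_𝕜 - ⟪y, A y⟫_𝕜 = ⟪x - y, A x⟫_𝕜 + ⟪y, A (x - y)⟫_𝕜 := by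
    simp only [inner_sub_left, map_sub, inner_sub_right]
    ring
  calc ‖⟪x, A x⟫_𝕜 - ⟪y, A y⟫_𝕜‖
      ≤ ‖x - y‖ * ‖A x‖ + ‖y‖ * ‖A (x - y)‖ := by
        rw [hsplit]
        exact (norm_add_le _ _).trans
          (add_le_add (norm_inner_le_norm _ _) (norm_inner_le_norm _ _))
    _ ≤ ‖x - y‖ * (‖A‖ * ‖x‖) + ‖y‖ * (‖A‖ * ‖x - y‖) := by
        gcongr <;> exact A.le_opNorm _
    _ = ‖A‖ * (‖x‖ + ‖y‖) * ‖x - y‖ := by ring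

theorem norm_sub_inner_smul_sq {x : E} (hx : ‖x‖ = 1) (y : E) :
    ‖y - ⟪x, y⟫_𝕜 • x‖ ^ 2 = ‖y‖ ^ 2 - ‖⟪x, y⟫_𝕜‖ ^ 2 := by
  rw [@norm_sub_sq 𝕜, inner_smul_right, norm_smul, hx, mul_one, ← inner_conj_symm,
    RCLike.conj_mul, ← RCLike.ofReal_pow, RCLike.ofReal_re, RCLike.norm_conj]
  ring

theorem inner_smul_apply_smul (A : E →L[𝕜] E) (c : 𝕜) (x : E) :
    ⟪c • x, A (c • x)⟫_𝕜 = (‖c‖ ^ 2 : ℝ) * ⟪x, A x⟫_𝕜 := by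
  rw [map_smul, inner_smul_left, inner_smul_right, ← mul_assoc, RCLike.conj_mul,
    RCLike.ofReal_pow]

variable {ι : Type*} {l : Filter ι} {x y : ι → E}

/-- Compare `y i` with its projection `⟪x i, y i⟫ • x i`, at distance `√(1 - ‖⟪x i, y i⟫‖²)`. -/
theorem tendsto_inner_apply_self_sub_of_tendsto_norm_inner (A : E →L[𝕜] E)
    (hx : ∀ i, ‖x i‖ = 1) (hy : ∀ i, ‖y i‖ = 1) (hxy : Tendsto (fun i => ‖⟪x i, y i⟫_𝕜‖) l (𝓝 1)) :
    Tendsto (fun i => ⟪y i, A (y i)⟫_𝕜 - ⟪x i, A (x i)⟫_𝕜) l (𝓝 0) := by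
  set c := fun i => ⟪x i, y i⟫_𝕜
  have hc : ∀ i, ‖c i‖ ≤ 1 := fun i => by
    simpa [hx i, hy i] using norm_inner_le_norm (𝕜 := 𝕜) (x i) (y i)
  have hdist : Tendsto (fun i => ‖y i - c i • x i‖) l (𝓝 0) := by
    have h := ((hxy.pow 2).const_sub 1).sqrt
    rw [one_pow, sub_self, Real.sqrt_zero] at h
    refine h.congr fun i => ?_
    rw [← Real.sqrt_sq (norm_nonneg (y i - c i • x i)), norm_sub_inner_smul_sq (hx i), hy i,
      one_pow]
  have hfirst : Tendsto (fun i => ⟪y i, A (y i)⟫_𝕜 - ⟪c i • x i, A (c i • x i)⟫_𝕜) l (𝓝 0) := by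
    refine squeeze_zero_norm (fun i => (norm_inner_apply_self_sub_le A _ _).trans ?_)
      (by simpa using hdist.const_mul (‖A‖ * 2))
    rw [hy i, norm_smul, hx i, mul_one, one_add_one_eq_two.symm]
    gcongr
    exact hc i
  have hsecond : Tendsto (fun i => ⟪c i • x i, A (c i • x i)⟫_𝕜 - ⟪x i, A (x i)⟫_𝕜) l (𝓝 0) := by
    simp only [inner_smul_apply_smul, ← sub_one_mul]
    refine Tendsto.zero_mul_isBoundedUnder_le ?_ ⟨‖A‖, eventually_map.2 <| .of_forall fun i =>
      norm_inner_apply_self_le A (hx i)⟩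
    simpa using ((RCLike.continuous_ofReal.tendsto _).comp (hxy.pow 2)).sub_const (1 : 𝕜)
  simpa using hfirst.add hsecond

theorem tendsto_mul_inner_apply_self_sub_of_tendsto_norm_inner (A B : E →L[𝕜] E) (c : 𝕜)
    (hx : ∀ i, ‖x i‖ = 1) (hy : ∀ i, ‖y i‖ = 1) (hxy : Tendsto (fun i => ‖⟪x i, y i⟫_𝕜‖) l (𝓝 1)) :
    Tendsto (fun i => c * ⟪y i, A (y i)⟫_𝕜 * conj ⟪y i, B (y i)⟫_𝕜
      - c * ⟪x i, A (x i)⟫_𝕜 * conj ⟪x i, B (x i)⟫_𝕜) l (𝓝 0) := by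
  have hA := tendsto_inner_apply_self_sub_of_tendsto_norm_inner A hx hy hxy
  have hB : Tendsto (fun i => conj (⟪y i, B (y i)⟫_𝕜 - ⟪x i, B (x i)⟫_𝕜)) l (𝓝 0) := by
    have := (RCLike.continuous_conj.tendsto 0).comp
      (tendsto_inner_apply_self_sub_of_tendsto_norm_inner B hx hy hxy)
    rwa [map_zero] at this
  have hsplit := ((hA.zero_mul_isBoundedUnder_le ⟨‖B‖, eventually_map.2 <| .of_forall fun i =>
    (RCLike.norm_conj _).trans_le (norm_inner_apply_self_le B (hy i))⟩).add
    (isBoundedUnder_le_mul_tendsto_zero ⟨‖A‖, eventually_map.2 <| .of_forall fun i =>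
      norm_inner_apply_self_le A (hx i)⟩ hB)).const_mul c
  rw [add_zero, mul_zero] at hsplit
  refine hsplit.congr fun i => ?_
  rw [map_sub]
  ring

end InnerProduct

section NumericalRadius

variable {E : Type*} [NormedAddCommGroup E] [InnerProductSpace ℂ E]

theorem numRad_bddAbove (A : E →L[ℂ] E) :
    BddAbove {r : ℝ | ∃ x : E, ‖x‖ = 1 ∧ r = ‖⟪x, A x⟫_ℂ‖} :=
  ⟨‖A‖, by rintro r ⟨x, hx, rfl⟩; exact norm_inner_apply_self_le A hx⟩

theorem norm_inner_apply_self_le_numRad (A : E →L[ℂ] E) {x : E} (hx : ‖x‖ = 1) :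
    ‖⟪x, A x⟫_ℂ‖ ≤ numRad A :=
  le_csSup (numRad_bddAbove A) ⟨x, hx, rfl⟩

theorem numRad_nonneg (A : E →L[ℂ] E) : 0 ≤ numRad A :=
  Real.sSup_nonneg fun _ ⟨_, _, hr⟩ => hr ▸ norm_nonneg _

theorem exists_lt_norm_inner_apply_self [Nontrivial E] (A : E →L[ℂ] E) {r : ℝ}
    (hr : r < numRad A) : ∃ x : E, ‖x‖ = 1 ∧ r < ‖⟪x, A x⟫_ℂ‖ := by
  obtain ⟨x₀, hx₀⟩ := exists_norm_eq E zero_le_one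
  obtain ⟨_, ⟨x, hx, rfl⟩, hlt⟩ := exists_lt_of_lt_csSup
    (s := {r : ℝ | ∃ x : E, ‖x‖ = 1 ∧ r = ‖⟪x, A x⟫_ℂ‖}) ⟨_, x₀, hx₀, rfl⟩ hr
  exact ⟨x, hx, hlt⟩

theorem inner_apply_add_smul (A B : E →L[ℂ] E) (c : ℂ) (x : E) :
    ⟪x, (A + c • B) x⟫_ℂ = ⟪x, A x⟫_ℂ + c * ⟪x, B x⟫_ℂ := by
  rw [add_apply, smul_apply, inner_add_right, inner_smul_right]

/-- Take `xₙ` nearly maximizing `|⟪x, (T + εₙ λ̄ S) x⟫|` with error `εₙ²`, `εₙ = 1 / (n + 1)`. -/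
theorem wBOrth.exists_maximizing_seq_re_ge [Nontrivial E] {T S : E →L[ℂ] E} (h : wBOrth T S)
    (lam : ℂ) :
    ∃ x : ℕ → E, (∀ n, ‖x n‖ = 1) ∧
      Tendsto (fun n => ‖⟪x n, T (x n)⟫_ℂ‖) atTop (𝓝 (numRad T)) ∧
      ∃ r : ℕ → ℝ, Tendsto r atTop (𝓝 0) ∧
        ∀ n, r n ≤ (lam * ⟪x n, T (x n)⟫_ℂ * conj ⟪x n, S (x n)⟫_ℂ).re := by
  set ε : ℕ → ℝ := fun n => 1 / (n + 1)
  have hε : ∀ n, 0 < ε n := fun n => by positivity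
  have hε0 : Tendsto ε atTop (𝓝 0) := tendsto_one_div_add_atTop_nhds_zero_nat
  have hnear : ∀ n, ∃ x : E, ‖x‖ = 1 ∧
      numRad T - ε n ^ 2 < ‖⟪x, T x⟫_ℂ + (ε n : ℂ) * (conj lam * ⟪x, S x⟫_ℂ)‖ := by
    intro n
    obtain ⟨x, hx, hlt⟩ := exists_lt_norm_inner_apply_self (T + ((ε n : ℂ) * conj lam) • S)
      (r := numRad T - ε n ^ 2) (by linarith [h ((ε n : ℂ) * conj lam), pow_pos (hε n) 2])
    rw [inner_apply_add_smul, mul_assoc] at hlt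
    exact ⟨x, hx, hlt⟩
  choose x hx hlt using hnear
  have hS : ∀ n, ‖conj lam * ⟪x n, S (x n)⟫_ℂ‖ ≤ ‖lam‖ * numRad S := fun n => by
    rw [norm_mul, Complex.norm_conj]
    exact mul_le_mul_of_nonneg_left (norm_inner_apply_self_le_numRad S (hx n)) (norm_nonneg lam)
  have hT : Tendsto (fun n => ‖⟪x n, T (x n)⟫_ℂ‖) atTop (𝓝 (numRad T)) := by
    refine tendsto_of_tendsto_of_tendsto_of_le_of_le (g := fun n =>
      numRad T - ε n ^ 2 - ε n * (‖lam‖ * numRad S)) ?_ tendsto_const_nhds (fun n => ?_)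
      (fun n => norm_inner_apply_self_le_numRad T (hx n))
    · simpa using ((hε0.pow 2).const_sub (numRad T)).sub (hε0.mul_const (‖lam‖ * numRad S))
    · have := norm_add_le (⟪x n, T (x n)⟫_ℂ) ((ε n : ℂ) * (conj lam * ⟪x n, S (x n)⟫_ℂ))
      rw [norm_mul, Complex.norm_real, Real.norm_of_nonneg (hε n).le] at this
      nlinarith [hlt n, hS n, hε n]
  refine ⟨x, hx, hT, fun n => -ε n * (numRad T + (‖lam‖ * numRad S) ^ 2 / 2),
    by simpa using hε0.neg.mul_const _, fun n => ?_⟩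
  have hre : (⟪x n, T (x n)⟫_ℂ * conj (conj lam * ⟪x n, S (x n)⟫_ℂ)).re
      = (lam * ⟪x n, T (x n)⟫_ℂ * conj ⟪x n, S (x n)⟫_ℂ).re := by
    rw [map_mul, Complex.conj_conj, mul_left_comm, mul_assoc]
  rw [← hre]
  exact Complex.neg_mul_le_re_mul_conj_of_lt_norm_add (hε n)
    (norm_inner_apply_self_le_numRad T (hx n)) (hS n) (hlt n)

end NumericalRadius

theorem stmt_10 (T S : H →L[ℂ] H) (h : wBOrth T S)
    (hseq : ∀ x : ℕ → H, (∀ n, ‖x n‖ = 1) →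
      Tendsto (fun n => ‖(inner ℂ (x n) (T (x n)) : ℂ)‖) atTop (𝓝 (numRad T)) →
      ∃ y : ℕ → H, (∀ n, ‖y n‖ = 1) ∧
        Tendsto (fun n => ‖(inner ℂ (y n) (S (y n)) : ℂ)‖) atTop (𝓝 (numRad S)) ∧
        Tendsto (fun n => ‖(inner ℂ (x n) (y n) : ℂ)‖) atTop (𝓝 1)) :
    wBOrth S T := by
  intro lam
  rcases subsingleton_or_nontrivial H with hH | hH
  · rw [Subsingleton.elim (S + lam • T) S]
  obtain ⟨x, hx, hTx, r, hr, hrx⟩ := h.exists_maximizing_seq_re_ge lam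
  obtain ⟨y, hy, hSy, hxy⟩ := hseq x hx hTx
  set P : H → ℂ := fun z => lam * ⟪z, T z⟫_ℂ * conj ⟪z, S z⟫_ℂ
  have hP : Tendsto (fun n => P (y n) - P (x n)) atTop (𝓝 0) :=
    tendsto_mul_inner_apply_self_sub_of_tendsto_norm_inner T S lam hx hy hxy
  have hlim : Tendsto (fun n => ‖⟪y n, S (y n)⟫_ℂ‖ ^ 2 + 2 * (r n + (P (y n) - P (x n)).re))
      atTop (𝓝 (numRad S ^ 2)) := by
    simpa using (hSy.pow 2).add ((hr.add ((Complex.continuous_re.tendsto 0).comp hP)).const_mul 2)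
  have hbound : ∀ n, ‖⟪y n, S (y n)⟫_ℂ‖ ^ 2 + 2 * (r n + (P (y n) - P (x n)).re)
      ≤ numRad (S + lam • T) ^ 2 := fun n => by
    have hexp := Complex.sq_norm_add_re_mul_conj_le ⟪y n, S (y n)⟫_ℂ (lam * ⟪y n, T (y n)⟫_ℂ)
    rw [← inner_apply_add_smul] at hexp
    have hmax := pow_le_pow_left₀ (norm_nonneg _)
      (norm_inner_apply_self_le_numRad (S + lam • T) (hy n)) 2
    simp only [P, Complex.sub_re]
    linarith [hrx n]
  exact (pow_le_pow_iff_left₀ (numRad_nonneg S) (numRad_nonneg _) two_ne_zero).mp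
    (le_of_tendsto' hlim hbound)
end
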